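/- arXiv:2406.17440 — 3 statements merged into one kernel-verified Lean document; each statement's English description precedes it below -/
import Mathlib

section
/- Assume f_u + g_v < 0, D > 0, σ > 0 and α ≤ 0. Then M(α) has an eigenvalue (over ℂ) with strictly positive real part if and only if det M(α) < 0, i.e. if and only if c(α) := σD²α² + D(σ f_u + g_v)α + (f_u g_v − f_v g_u) < 0. -/
/-- Assume `f_u + g_v < 0`, `D > 0`, `σ > 0`, `α ≤ 0`.  Then
`M(α)` has an eigenvalue (over `ℂ`) with strictly positive real part iff
`det M(α) < 0`, i.e. iff `c(α) = σD²α² + D(σ f_u + g_v)α + (f_u g_v − f_v g_u) < 0`. -/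
theorem stmt3 (fu fv gu gv D σ α : ℝ)
    (htr : fu + gv < 0) (hD : 0 < D) (hσ : 0 < σ) (hα : α ≤ 0)
    (M : Matrix (Fin 2) (Fin 2) ℝ)
    (hM : M = !![fu + D * α, fv; gu, gv + σ * D * α]) :
    ((∃ μ ∈ spectrum ℂ (M.map Complex.ofReal), 0 < μ.re) ↔ M.det < 0)
    ∧ (M.det < 0 ↔
        σ * D ^ 2 * α ^ 2 + D * (σ * fu + gv) * α + (fu * gv - fv * gu) < 0) := by
  set a : ℝ := fu + D * α with ha
  set d : ℝ := gv + σ * D * α with hd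
  have hDα : D * α ≤ 0 := by nlinarith
  have hσDα : σ * (D * α) ≤ 0 := mul_nonpos_of_nonneg_of_nonpos hσ.le hDα
  have hdet : M.det = a * d - fv * gu := by
    rw [hM, Matrix.det_fin_two]; simp [ha, hd]
  have hT : a + d < 0 := by rw [ha, hd]; nlinarith
  have hspec : ∀ μ : ℂ, μ ∈ spectrum ℂ (M.map Complex.ofReal) ↔
      (μ - (a : ℂ)) * (μ - (d : ℂ)) - (fv : ℂ) * (gu : ℂ) = 0 := by
    intro μ
    rw [hM, spectrum.mem_iff, Matrix.isUnit_iff_isUnit_det, isUnit_iff_ne_zero, not_ne_iff,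
      Matrix.det_fin_two]
    simp [Matrix.algebraMap_matrix_apply, ha, hd]
  constructor
  · constructor
    · rintro ⟨μ, hμ, hre⟩
      rw [hspec] at hμ
      rw [Complex.ext_iff] at hμ
      simp [Complex.mul_re, Complex.mul_im] at hμ
      obtain ⟨h1, h2⟩ := hμ
      have him : μ.im = 0 := by
        rcases mul_eq_zero.mp (show μ.im * (2 * μ.re - (a + d)) = 0 by linarith [h2]) with h | h
        · exact h
        · nlinarith
      rw [hdet]
      nlinarith [him, h1]
    · intro hΔ
      rw [hdet] at hΔ
      set s : ℝ := Real.sqrt ((a + d) ^ 2 - 4 * (a * d - fv * gu)) with hs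
      have hs2 : s ^ 2 = (a + d) ^ 2 - 4 * (a * d - fv * gu) := Real.sq_sqrt (by nlinarith)
      have hsnn : 0 ≤ s := Real.sqrt_nonneg _
      have hsgt : -(a + d) < s := by nlinarith
      refine ⟨(((a + d + s) / 2 : ℝ) : ℂ), ?_, by simpa using by linarith⟩
      rw [hspec]
      have key : ((a + d + s) / 2 - a) * ((a + d + s) / 2 - d) - fv * gu = 0 := by
        linear_combination hs2 / 4
      exact_mod_cast key
  · rw [hdet, ha, hd]
    constructor <;> intro h <;> nlinarith
end

section
/- Assume D > 0, σ > 1 and f_v g_u < 0. Define γ₊(α) = (1/2)·[ f_u + g_v + (1+σ)Dα + √( 4 f_v g_u + (f_u − g_v + (1−σ)Dα)² ) ] and α_max = ( f_u − g_v − (1+σ)·√( −f_v g_u / σ ) ) / ( D(σ−1) ). Then the radicand at α_max equals (−f_v g_u)(σ−1)²/σ > 0, and γ₊ is differentiable at α_max with derivative 0 there (i.e. α_max is a stationary point of the growth rate of the most unstable mode). -/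
/-- With `D > 0`, `σ > 1` and `f_v g_u < 0`, let
`γ₊(α) = ½ (f_u + g_v + (1+σ)Dα + √(4 f_v g_u + (f_u − g_v + (1−σ)Dα)²))` and
`α_max = (f_u − g_v − (1+σ)√(−f_v g_u/σ)) / (D(σ−1))`.  Then the radicand at
`α_max` equals `(−f_v g_u)(σ−1)²/σ > 0`, and `γ₊` is differentiable at `α_max`
with derivative `0` there. -/
theorem stmt7 (fu fv gu gv D σ : ℝ) (hD : 0 < D) (hσ : 1 < σ) (hfvgu : fv * gu < 0)
    (γp : ℝ → ℝ)
    (hγp : γp = fun α : ℝ => (1 / 2) * (fu + gv + (1 + σ) * D * α +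
        Real.sqrt (4 * fv * gu + (fu - gv + (1 - σ) * D * α) ^ 2)))
    (αmax : ℝ)
    (hαmax : αmax = (fu - gv - (1 + σ) * Real.sqrt (-(fv * gu) / σ)) / (D * (σ - 1))) :
    (4 * fv * gu + (fu - gv + (1 - σ) * D * αmax) ^ 2
        = (-(fv * gu)) * (σ - 1) ^ 2 / σ)
    ∧ 0 < (-(fv * gu)) * (σ - 1) ^ 2 / σ
    ∧ HasDerivAt γp 0 αmax := by
  have hσ0 : (0:ℝ) < σ := lt_trans one_pos hσ
  have hσ1 : σ - 1 ≠ 0 := by linarith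
  have hD' : D ≠ 0 := ne_of_gt hD
  set s := Real.sqrt (-(fv * gu) / σ) with hs
  have hposq : (0:ℝ) < -(fv * gu) / σ := div_pos (by linarith) hσ0
  have hs2 : s ^ 2 = -(fv * gu) / σ := Real.sq_sqrt hposq.le
  have hspos : 0 < s := Real.sqrt_pos.mpr hposq
  have hu : fu - gv + (1 - σ) * D * αmax = (1 + σ) * s := by
    rw [hαmax]; field_simp; ring
  have hrad : 4 * fv * gu + (fu - gv + (1 - σ) * D * αmax) ^ 2
      = (-(fv * gu)) * (σ - 1) ^ 2 / σ := by
    rw [hu, mul_pow, hs2]; field_simp; ring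
  have hpos : 0 < (-(fv * gu)) * (σ - 1) ^ 2 / σ :=
    div_pos (mul_pos (by linarith) (pow_pos (by linarith) 2)) hσ0
  refine ⟨hrad, hpos, ?_⟩
  have hsqrtrad : Real.sqrt (4 * fv * gu + (fu - gv + (1 - σ) * D * αmax) ^ 2)
      = (σ - 1) * s := by
    rw [hrad, show (-(fv * gu)) * (σ - 1) ^ 2 / σ = ((σ - 1) * s) ^ 2 by
      rw [mul_pow, hs2]; ring]
    exact Real.sqrt_sq (mul_nonneg (by linarith) hspos.le)
  have ha : HasDerivAt (fun α : ℝ => fu - gv + (1 - σ) * D * α) ((1 - σ) * D) αmax := by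
    simpa using (((hasDerivAt_id αmax).const_mul ((1 - σ) * D)).const_add (fu - gv))
  have h1 : HasDerivAt (fun α : ℝ => 4 * fv * gu + (fu - gv + (1 - σ) * D * α) ^ 2)
      (2 * (fu - gv + (1 - σ) * D * αmax) * ((1 - σ) * D)) αmax := by
    have := (ha.pow 2).const_add (4 * fv * gu)
    exact this.congr_deriv (by ring)
  have hne : 4 * fv * gu + (fu - gv + (1 - σ) * D * αmax) ^ 2 ≠ 0 := by
    rw [hrad]; exact ne_of_gt hpos
  have h2 := (Real.hasDerivAt_sqrt hne).comp αmax h1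
  have hlin : HasDerivAt (fun α : ℝ => fu + gv + (1 + σ) * D * α) ((1 + σ) * D) αmax := by
    simpa using (((hasDerivAt_id αmax).const_mul ((1 + σ) * D)).const_add (fu + gv))
  have h3 := (hlin.add h2).const_mul (1 / 2 : ℝ)
  rw [hγp]
  refine h3.congr_deriv ?_
  rw [Function.comp_def] at *
  rw [hsqrtrad, hu]
  field_simp
  ring
end

section
/- Let L be a real symmetric N×N matrix and φ ∈ ℝᴺ a nonzero vector with L φ = α φ for some real α. Assume f_v ≠ 0 and det M(α) < 0 where M(α) = [[f_u + Dα, f_v],[g_u, g_v + σDα]]. Then there exist a real γ > 0 and B ∈ ℝ such that u(t) = e^{γt} φ and v(t) = B e^{γt} φ solve u'(t) = f_u u(t) + f_v v(t) + D·L u(t) and v'(t) = g_u u(t) + g_v v(t) + σD·L v(t) for all t; in particular the linearized system admits a solution whose norm grows without bound as t → ∞ (Turing instability of the homogeneous state along the eigenmode φ). -/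
/-- Let `L` be a real symmetric `N×N` matrix and `φ ≠ 0` an
eigenvector with `Lφ = αφ`.  If `f_v ≠ 0` and `det M(α) < 0` (the unstable-band
condition `c(α) < 0`), then there are `γ > 0` and `B ∈ ℝ` such that
`u(t) = e^{γt}φ`, `v(t) = B e^{γt}φ` solve the linearized system, and the norm
of `u` grows without bound as `t → ∞` (Turing instability along `φ`). -/
theorem stmt9 {N : ℕ} (fu fv gu gv D σ α : ℝ)
    (L : Matrix (Fin N) (Fin N) ℝ) (hL : L.IsSymm)
    (φ : Fin N → ℝ) (hφ0 : φ ≠ 0) (hφ : L.mulVec φ = α • φ)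
    (hfv : fv ≠ 0)
    (hdet : (!![fu + D * α, fv; gu, gv + σ * D * α]).det < 0) :
    ∃ γ B : ℝ, 0 < γ ∧
      (∀ t : ℝ,
        HasDerivAt (fun s : ℝ => Real.exp (γ * s) • φ)
          (fu • (Real.exp (γ * t) • φ) + fv • (B • (Real.exp (γ * t) • φ))
            + D • L.mulVec (Real.exp (γ * t) • φ)) t ∧
        HasDerivAt (fun s : ℝ => B • (Real.exp (γ * s) • φ))
          (gu • (Real.exp (γ * t) • φ) + gv • (B • (Real.exp (γ * t) • φ))
            + (σ * D) • L.mulVec (B • (Real.exp (γ * t) • φ))) t) ∧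
      Filter.Tendsto (fun t : ℝ => ‖Real.exp (γ * t) • φ‖)
        Filter.atTop Filter.atTop := by
  have hdet' : (fu + D * α) * (gv + σ * D * α) - fv * gu < 0 := by
    have := hdet
    rw [Matrix.det_fin_two_of] at this
    linarith
  -- abbreviations
  have a_def : True := trivial
  set a : ℝ := fu + D * α with ha
  set d : ℝ := gv + σ * D * α with hd
  have hdiscpos : (0:ℝ) < (a + d) ^ 2 - 4 * (a * d - fv * gu) := by
    nlinarith [sq_nonneg (a - d)]
  set s : ℝ := Real.sqrt ((a + d) ^ 2 - 4 * (a * d - fv * gu)) with hs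
  have hs2 : s ^ 2 = (a + d) ^ 2 - 4 * (a * d - fv * gu) :=
    Real.sq_sqrt hdiscpos.le
  have hsgt : |a + d| < s := by
    have h1 : Real.sqrt ((a + d) ^ 2) < s := by
      apply Real.sqrt_lt_sqrt (sq_nonneg _)
      nlinarith
    simpa [Real.sqrt_sq_eq_abs] using h1
  set γ : ℝ := ((a + d) + s) / 2 with hγdef
  have hγpos : 0 < γ := by
    have h2 := neg_abs_le (a + d)
    rw [hγdef]; linarith
  have hquad : γ ^ 2 - (a + d) * γ + (a * d - fv * gu) = 0 := by
    rw [hγdef]; linear_combination (1/4 : ℝ) * hs2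
  set B : ℝ := (γ - a) / fv with hBdef
  have hB : fv * B = γ - a := by
    rw [hBdef]; field_simp
  have hB2 : gu + d * B = γ * B := by
    have h3 : (γ - a) * (γ - d) = fv * gu := by linear_combination hquad
    have h4 : (γ - d) * B = gu := by
      rw [hBdef]
      field_simp
      linear_combination h3
    linear_combination -h4
  refine ⟨γ, B, hγpos, ?_, ?_⟩
  · intro t
    have he : HasDerivAt (fun u : ℝ => Real.exp (γ * u)) (γ * Real.exp (γ * t)) t := by
      have h5 : HasDerivAt (fun u : ℝ => γ * u) γ t := by
        simpa using (hasDerivAt_id t).const_mul γ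
      have h6 := (Real.hasDerivAt_exp (γ * t)).comp t h5
      simpa only [Function.comp_def, mul_comm (Real.exp (γ * t)) γ] using h6
    have hu : HasDerivAt (fun u : ℝ => Real.exp (γ * u) • φ)
        ((γ * Real.exp (γ * t)) • φ) t := he.smul_const φ
    have hLe : L.mulVec (Real.exp (γ * t) • φ) = Real.exp (γ * t) • (α • φ) := by
      rw [Matrix.mulVec_smul, hφ]
    constructor
    · have heq : fu • (Real.exp (γ * t) • φ) + fv • (B • (Real.exp (γ * t) • φ))
          + D • L.mulVec (Real.exp (γ * t) • φ) = (γ * Real.exp (γ * t)) • φ := by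
        rw [hLe, smul_smul, smul_smul, smul_smul, smul_smul, smul_smul,
          ← add_smul, ← add_smul]
        congr 1
        have : fu + fv * B + D * α = γ := by rw [ha] at hB; linarith
        linear_combination Real.exp (γ * t) * this
      rw [heq]; exact hu
    · have heq2 : gu • (Real.exp (γ * t) • φ) + gv • (B • (Real.exp (γ * t) • φ))
          + (σ * D) • L.mulVec (B • (Real.exp (γ * t) • φ))
          = B • ((γ * Real.exp (γ * t)) • φ) := by
        rw [Matrix.mulVec_smul, hLe]
        rw [smul_smul, smul_smul, smul_smul, smul_smul, smul_smul, smul_smul,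
          smul_smul, ← add_smul, ← add_smul]
        congr 1
        have : gu + (gv + σ * D * α) * B = γ * B := by rw [← hd]; exact hB2
        linear_combination Real.exp (γ * t) * this
      rw [heq2]; exact hu.const_smul B
  · have hφn : 0 < ‖φ‖ := norm_pos_iff.mpr hφ0
    have h6 : Filter.Tendsto (fun t : ℝ => γ * t) Filter.atTop Filter.atTop :=
      Filter.Tendsto.const_mul_atTop hγpos Filter.tendsto_id
    have h7 : Filter.Tendsto (fun t : ℝ => Real.exp (γ * t)) Filter.atTop Filter.atTop :=
      Real.tendsto_exp_atTop.comp h6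
    have h8 := h7.atTop_mul_const hφn
    refine h8.congr (fun t => ?_)
    rw [norm_smul, Real.norm_eq_abs, abs_of_pos (Real.exp_pos _)]
end
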